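/- arXiv:math/0406341 — 2 statements merged into one kernel-verified Lean document; each statement's English description precedes it below -/
import Mathlib

section
/- Let S be a symmetric endomorphism of a real inner product space of dimension n-1 (with n-1 ≥ 1) such that Tr(S) = 0 and S satisfies the recursion relations forcing Tr(S^{2k+1}) = 0 and Tr(S^{2k}) = n-1 for all natural k. Then S² = 1, and since S is traceless with eigenvalues ±1 of equal multiplicity, n-1 must be even. -/
/-! In an orthonormal eigenbasis the trace conditions say that the eigenvalues `μ` satisfy
`∑ μ = 0` and `∑ μ² = ∑ μ⁴ = n - 1`, so `∑ (μ² - 1)² = 0`: every eigenvalue is `±1`, whence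
`S² = 1`, and the two signs occur equally often. -/

namespace LinearMap.IsSymmetric

variable {𝕜 E : Type*} [RCLike 𝕜] [NormedAddCommGroup E] [InnerProductSpace 𝕜 E]
  [FiniteDimensional 𝕜 E] {n : ℕ} {T : E →ₗ[𝕜] E}

lemma pow_apply_eigenvectorBasis (hT : T.IsSymmetric) (hn : Module.finrank 𝕜 E = n) (p : ℕ)
    (i : Fin n) :
    (T ^ p) (hT.eigenvectorBasis hn i) =
      (hT.eigenvalues hn i : 𝕜) ^ p • hT.eigenvectorBasis hn i := by
  induction p with
  | zero => simp
  | succ p ih =>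
    rw [pow_succ', Module.End.mul_apply, ih, map_smul, hT.apply_eigenvectorBasis, smul_smul,
      pow_succ]

lemma trace_pow_eq_sum_eigenvalues_pow (hT : T.IsSymmetric) (hn : Module.finrank 𝕜 E = n)
    (p : ℕ) :
    LinearMap.trace 𝕜 E (T ^ p) = ∑ i, (hT.eigenvalues hn i : 𝕜) ^ p := by
  rw [LinearMap.trace_eq_sum_inner _ (hT.eigenvectorBasis hn)]
  refine Fintype.sum_congr _ _ fun i => ?_
  rw [hT.pow_apply_eigenvectorBasis hn, inner_smul_right, inner_self_eq_norm_sq_to_K,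
    (hT.eigenvectorBasis hn).orthonormal.1 i]
  simp

lemma mul_self_eq_one_of_eigenvalues_sq_eq_one (hT : T.IsSymmetric)
    (hn : Module.finrank 𝕜 E = n) (h : ∀ i, hT.eigenvalues hn i ^ 2 = 1) : T * T = 1 := by
  refine (hT.eigenvectorBasis hn).toBasis.ext fun i => ?_
  rw [OrthonormalBasis.coe_toBasis, ← sq, hT.pow_apply_eigenvectorBasis hn, ← RCLike.ofReal_pow,
    h i]
  simp

end LinearMap.IsSymmetric

namespace Finset

variable {ι : Type*}

lemma sq_eq_one_of_sum_sq_eq_card_of_sum_pow_four_eq_card (s : Finset ι) (f : ι → ℝ)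
    (h2 : ∑ i ∈ s, f i ^ 2 = #s) (h4 : ∑ i ∈ s, f i ^ 4 = #s) : ∀ i ∈ s, f i ^ 2 = 1 := by
  have hzero : ∑ i ∈ s, (f i ^ 2 - 1) ^ 2 = 0 := by
    calc ∑ i ∈ s, (f i ^ 2 - 1) ^ 2
        = ∑ i ∈ s, f i ^ 4 - 2 * ∑ i ∈ s, f i ^ 2 + ∑ _i ∈ s, (1 : ℝ) := by
          rw [mul_sum, ← sum_sub_distrib, ← sum_add_distrib]
          exact sum_congr rfl fun i _ => by ring
      _ = 0 := by rw [h2, h4, sum_const, nsmul_one]; ring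
  intro i hi
  have := (sum_eq_zero_iff_of_nonneg fun i _ => sq_nonneg (f i ^ 2 - 1)).mp hzero i hi
  nlinarith

lemma even_card_of_sum_eq_zero (s : Finset ι) (f : ι → ℝ) (hf : ∀ i ∈ s, f i ^ 2 = 1)
    (hsum : ∑ i ∈ s, f i = 0) : Even #s := by
  classical
  have hpm (i) (hi : i ∈ s) : f i = 2 * (if f i = 1 then 1 else 0) - 1 := by
    rcases sq_eq_one_iff.mp (hf i hi) with h | h <;> norm_num [h]
  have hcount : (#s : ℝ) = 2 * #{i ∈ s | f i = 1} := by
    rw [sum_congr rfl hpm, sum_sub_distrib, ← mul_sum, sum_boole, sum_const, nsmul_one]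
      at hsum
    linarith
  exact ⟨#{i ∈ s | f i = 1}, by exact_mod_cast hcount.trans (two_mul _)⟩

end Finset

theorem stmt0_general {V : Type*} [NormedAddCommGroup V] [InnerProductSpace ℝ V]
    [FiniteDimensional ℝ V] (n : ℕ)
    (hdim : Module.finrank ℝ V = n - 1)
    (S : V →ₗ[ℝ] V) (hS : S.IsSymmetric)
    (hodd : ∀ k : ℕ, LinearMap.trace ℝ V (S ^ (2 * k + 1)) = 0)
    (heven : ∀ k : ℕ, LinearMap.trace ℝ V (S ^ (2 * k)) = (n - 1 : ℕ)) :
    S * S = 1 ∧ Even (n - 1) := by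
  set μ := hS.eigenvalues hdim
  have htrace (p : ℕ) : LinearMap.trace ℝ V (S ^ p) = ∑ i, μ i ^ p :=
    hS.trace_pow_eq_sum_eigenvalues_pow hdim p
  have hsq : ∀ i, μ i ^ 2 = 1 := fun i =>
    Finset.sq_eq_one_of_sum_sq_eq_card_of_sum_pow_four_eq_card Finset.univ μ
      (by simpa [htrace] using heven 1) (by simpa [htrace] using heven 2) i (Finset.mem_univ i)
  refine ⟨hS.mul_self_eq_one_of_eigenvalues_sq_eq_one hdim hsq, ?_⟩
  simpa using Finset.even_card_of_sum_eq_zero Finset.univ μ (fun i _ => hsq i)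
    (by simpa using (htrace 1).symm.trans (hodd 0))

/-- A symmetric endomorphism of an `(n-1)`-dimensional real inner product space whose odd
power traces vanish and whose even power traces all equal `n-1` squares to the identity,
and `n-1` is even. -/
theorem stmt0 {V : Type*} [NormedAddCommGroup V] [InnerProductSpace ℝ V]
    [FiniteDimensional ℝ V] (n : ℕ) (hn : 1 ≤ n - 1)
    (hdim : Module.finrank ℝ V = n - 1)
    (S : V →ₗ[ℝ] V) (hS : S.IsSymmetric)
    (hodd : ∀ k : ℕ, LinearMap.trace ℝ V (S ^ (2 * k + 1)) = 0)
    (heven : ∀ k : ℕ, LinearMap.trace ℝ V (S ^ (2 * k)) = (n - 1 : ℕ)) :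
    S * S = 1 ∧ Even (n - 1) :=
  stmt0_general n hdim S hS hodd heven
end

section
/- Let σ be a symmetric involution on a 6-dimensional inner product space with 2-dimensional (-1)-eigenspace 𝒱 and 4-dimensional (+1)-eigenspace H, and let S be a nonzero symmetric endomorphism anticommuting with σ. Set H₁ = S(𝒱) and let H₂ be the orthogonal complement of H₁ in H. If S₁ is a symmetric endomorphism commuting with σ such that SS₁ + S₁S = λS for some real λ, then S₁ preserves both H₁ and H₂. -/
open scoped RealInnerProductSpace

/-- On a 6-dimensional inner product space, let `σ` be a symmetric involution with
2-dimensional `(-1)`-eigenspace `𝒱` and 4-dimensional `(+1)`-eigenspace `H`, and let `S`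
be a nonzero symmetric endomorphism anticommuting with `σ` and injective on `𝒱`; set
`H₁ = S(𝒱)` and `H₂ = H ∩ H₁^⊥`. If `S₁` is symmetric, commutes with `σ` and satisfies
`S S₁ + S₁ S = λ S`, then `S₁` preserves `H₁` and `H₂`. -/
theorem stmt16 {V : Type*} [NormedAddCommGroup V] [InnerProductSpace ℝ V]
    [FiniteDimensional ℝ V] (hdim : Module.finrank ℝ V = 6)
    (σ S S₁ : V →ₗ[ℝ] V) (lam : ℝ)
    (hσ : σ.IsSymmetric) (hσ2 : σ * σ = 1)
    (𝒱 H : Submodule ℝ V)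
    (h𝒱 : 𝒱 = Module.End.eigenspace σ (-1)) (hH : H = Module.End.eigenspace σ 1)
    (h𝒱dim : Module.finrank ℝ 𝒱 = 2) (hHdim : Module.finrank ℝ H = 4)
    (hS : S.IsSymmetric) (hSne : S ≠ 0) (hanti : S * σ = -(σ * S))
    (hinj : ∀ v ∈ 𝒱, S v = 0 → v = 0)
    (H₁ H₂ : Submodule ℝ V)
    (hH₁ : H₁ = Submodule.map S 𝒱) (hH₂ : H₂ = H ⊓ H₁ᗮ)
    (hS₁ : S₁.IsSymmetric) (hcomm : S₁ * σ = σ * S₁)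
    (hrel : S * S₁ + S₁ * S = lam • S) :
    Submodule.map S₁ H₁ ≤ H₁ ∧ Submodule.map S₁ H₂ ≤ H₂ := by

  -- S₁ preserves 𝒱
  have hpres𝒱 : ∀ v ∈ 𝒱, S₁ v ∈ 𝒱 := by
    intro v hv
    rw [h𝒱, Module.End.mem_eigenspace_iff] at hv ⊢
    have := LinearMap.congr_fun hcomm v
    simp only [Module.End.mul_apply] at this
    rw [← this, hv, map_smul]
  -- S₁ preserves H₁
  have key : ∀ v ∈ 𝒱, S₁ (S v) ∈ H₁ := by
    intro v hv
    have hr := LinearMap.congr_fun hrel v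
    simp only [LinearMap.add_apply, Module.End.mul_apply, LinearMap.smul_apply] at hr
    have : S₁ (S v) = S (lam • v - S₁ v) := by
      rw [map_sub, map_smul, eq_sub_iff_add_eq, add_comm]
      exact hr
    rw [hH₁, this]
    exact Submodule.mem_map_of_mem (Submodule.sub_mem 𝒱 (Submodule.smul_mem 𝒱 lam hv) (hpres𝒱 v hv))
  have part1 : Submodule.map S₁ H₁ ≤ H₁ := by
    intro x hx
    obtain ⟨y, hy, rfl⟩ := hx
    rw [hH₁] at hy
    obtain ⟨v, hv, rfl⟩ := hy
    exact key v hv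
  refine ⟨part1, ?_⟩
  intro x hx
  obtain ⟨y, hy, rfl⟩ := hx
  rw [hH₂] at hy
  obtain ⟨hyH, hyO⟩ := Submodule.mem_inf.mp hy
  rw [hH₂, Submodule.mem_inf]
  constructor
  · rw [hH, Module.End.mem_eigenspace_iff] at hyH ⊢
    have := LinearMap.congr_fun hcomm y
    simp only [Module.End.mul_apply] at this
    rw [← this, hyH, map_smul]
  · rw [Submodule.mem_orthogonal]
    intro u hu
    rw [(hS₁ u y).symm]
    exact hyO (S₁ u) (part1 (Submodule.mem_map_of_mem hu))
end
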